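/- arXiv:2106.15763 — 4 statements merged into one kernel-verified Lean document; each statement's English description precedes it below -/
import Mathlib

section
/- If γ : [a,b] → X is a Lipschitz curve into a metric space, then for almost every t ∈ [a,b) the derivative of the arc-length function equals the metric speed: lim_{h→0⁺} ℓ(γ|_{[t,t+h]})/h = lim_{h→0⁺} d(γ(t+h),γ(t))/h, and both limits exist for almost every t. -/
/-!
Extend `γ` to a Lipschitz curve `δ` on all of `ℝ`. Its arc-length function `s` is monotone, hence
differentiable almost everywhere, and `d(δ(t+h), δ t) ≤ s(t+h) - s(t)`, so the upper limit of the
metric difference quotient is at most `s'(t)`.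

For the lower limit, let `m = sup_{r ∈ ℚ} |φ_r'|` with `φ_r = d(δ ·, δ r)`. Each `φ_r` is Lipschitz,
so `φ_r(q) - φ_r(p) = ∫_p^q φ_r' ≤ ∫_p^q m`; since `δ(ℚ)` is dense in the curve this gives
`d(δ p, δ q) ≤ ∫_p^q m`, hence `ℓ(δ|[p,q]) ≤ ∫_p^q m` and `s'(t) ≤ m(t)` at Lebesgue points of `m`.
On the other hand `|φ_r(t+h) - φ_r(t)| ≤ d(δ(t+h), δ t)`, so the lower limit of the metric
difference quotient is at least every `|φ_r'(t)|`, i.e. at least `m(t) ≥ s'(t)`.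
-/

open Set Filter MeasureTheory Topology NNReal

theorem LipschitzOnWith.exists_lipschitzWith_eqOn_Icc {X : Type*} [PseudoEMetricSpace X]
    {L : ℝ≥0} {γ : ℝ → X} {a b : ℝ} (hγ : LipschitzOnWith L γ (Icc a b)) :
    ∃ δ : ℝ → X, LipschitzWith L δ ∧ EqOn γ δ (Icc a b) := by
  rcases le_or_gt a b with hab | hab
  · refine ⟨IccExtend hab (fun x : Icc a b => γ x), ?_,
      fun t ht => (IccExtend_of_mem hab (fun x : Icc a b => γ x) ht).symm⟩
    exact mul_one L ▸ hγ.to_restrict.comp (LipschitzWith.projIcc hab)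
  · exact ⟨fun _ => γ a, LipschitzWith.const' _, by simp [Icc_eq_empty_of_lt hab]⟩

theorem eVariationOn_le_of_edist_le {α E F : Type*} [LinearOrder α] [PseudoEMetricSpace E]
    [PseudoEMetricSpace F] {f : α → E} {g : α → F} {s : Set α}
    (h : ∀ x ∈ s, ∀ y ∈ s, edist (f x) (f y) ≤ edist (g x) (g y)) :
    eVariationOn f s ≤ eVariationOn g s :=
  iSup_mono fun p => Finset.sum_le_sum fun _ _ => h _ (p.2.2.2 _) _ (p.2.2.2 _)

theorem LocallyBoundedVariationOn.variationOnFromTo_sub_eq {α E : Type*} [LinearOrder α]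
    [PseudoEMetricSpace E] {f : α → E} (hf : LocallyBoundedVariationOn f univ) (a : α) {p q : α}
    (hpq : p ≤ q) :
    variationOnFromTo f univ a q - variationOnFromTo f univ a p
      = (eVariationOn f (Icc p q)).toReal := by
  rw [variationOnFromTo.sub_right hf (mem_univ a) (mem_univ q) (mem_univ p),
    variationOnFromTo.eq_of_le _ _ hpq, univ_inter]

theorem LocallyBoundedVariationOn.tendsto_eVariationOn_Icc_div {E : Type*} [PseudoEMetricSpace E]
    {f : ℝ → E} (hf : LocallyBoundedVariationOn f univ) {t w : ℝ}
    (hF : HasDerivAt (variationOnFromTo f univ 0) w t) :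
    Tendsto (fun h => (eVariationOn f (Icc t (t + h))).toReal / h) (𝓝[>] 0) (𝓝 w) := by
  refine hF.tendsto_slope_zero_right.congr' ?_
  filter_upwards [self_mem_nhdsWithin] with h (hh : 0 < h)
  rw [hf.variationOnFromTo_sub_eq 0 (by linarith), smul_eq_mul, inv_mul_eq_div]

section SupAbsDerivDist

variable {X : Type*} [PseudoMetricSpace X] {L : ℝ≥0} {δ : ℝ → X}

noncomputable def supAbsDerivDist (δ : ℝ → X) (t : ℝ) : ℝ :=
  ⨆ r : ℚ, |deriv (fun s => dist (δ s) (δ r)) t|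

theorem LipschitzWith.dist_comp_left (hδ : LipschitzWith L δ) (x : X) :
    LipschitzWith L (fun s => dist (δ s) x) := by
  simpa [Function.comp_def] using (LipschitzWith.dist_left x).comp hδ

theorem LipschitzWith.abs_deriv_dist_le (hδ : LipschitzWith L δ) (x : X) (t : ℝ) :
    |deriv (fun s => dist (δ s) x) t| ≤ L :=
  norm_deriv_le_of_lipschitz (hδ.dist_comp_left x)

theorem supAbsDerivDist_nonneg (δ : ℝ → X) (t : ℝ) : 0 ≤ supAbsDerivDist δ t :=
  Real.iSup_nonneg fun _ => abs_nonneg _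

theorem LipschitzWith.supAbsDerivDist_le (hδ : LipschitzWith L δ) (t : ℝ) :
    supAbsDerivDist δ t ≤ L :=
  ciSup_le fun _ => hδ.abs_deriv_dist_le _ t

theorem LipschitzWith.abs_deriv_dist_le_supAbsDerivDist (hδ : LipschitzWith L δ) (r : ℚ)
    (t : ℝ) : |deriv (fun s => dist (δ s) (δ r)) t| ≤ supAbsDerivDist δ t :=
  le_ciSup (f := fun r : ℚ => |deriv (fun s => dist (δ s) (δ r)) t|)
    ⟨L, forall_mem_range.2 fun _ => hδ.abs_deriv_dist_le _ t⟩ r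

theorem measurable_supAbsDerivDist (δ : ℝ → X) : Measurable (supAbsDerivDist δ) :=
  Measurable.iSup fun _ => (measurable_deriv _).abs

theorem LipschitzWith.locallyIntegrable_supAbsDerivDist (hδ : LipschitzWith L δ) :
    LocallyIntegrable (supAbsDerivDist δ) volume :=
  (locallyIntegrable_const (L : ℝ)).mono (measurable_supAbsDerivDist δ).aestronglyMeasurable
    (ae_of_all _ fun t => by
      rw [Real.norm_of_nonneg (supAbsDerivDist_nonneg δ t), Real.norm_of_nonneg L.coe_nonneg]
      exact hδ.supAbsDerivDist_le t)

theorem LipschitzWith.intervalIntegrable_supAbsDerivDist (hδ : LipschitzWith L δ) (p q : ℝ) :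
    IntervalIntegrable (supAbsDerivDist δ) volume p q :=
  (hδ.locallyIntegrable_supAbsDerivDist.integrableOn_isCompact isCompact_uIcc).intervalIntegrable

theorem LipschitzWith.dist_le_integral_supAbsDerivDist (hδ : LipschitzWith L δ) {p q : ℝ}
    (hpq : p ≤ q) : dist (δ p) (δ q) ≤ ∫ t in p..q, supAbsDerivDist δ t := by
  set I := ∫ t in p..q, supAbsDerivDist δ t
  have hrat (r : ℚ) : dist (δ q) (δ r) - dist (δ p) (δ r) ≤ I := by
    have hac :=
      ((hδ.dist_comp_left (δ r)).lipschitzOnWith (s := uIcc p q)).absolutelyContinuousOnInterval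
    rw [← hac.integral_deriv_eq_sub]
    exact intervalIntegral.integral_mono_on hpq hac.intervalIntegrable_deriv
      (hδ.intervalIntegrable_supAbsDerivDist p q)
      fun t _ => (le_abs_self _).trans (hδ.abs_deriv_dist_le_supAbsDerivDist r t)
  -- Triangle inequality through `δ s` costs `2 dist (δ p) (δ s)`; let rational `s` tend to `p`.
  have hnear (s : ℝ) : dist (δ p) (δ q) ≤ I + 2 * dist (δ p) (δ s) := by
    have := hδ.continuous
    refine Rat.denseRange_cast.induction_on s
      (isClosed_le continuous_const (by fun_prop)) fun r => ?_
    linarith [hrat r, dist_triangle (δ p) (δ r) (δ q), dist_comm (δ r) (δ q)]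
  simpa using hnear p

theorem LipschitzWith.eVariationOn_Icc_le_integral_supAbsDerivDist (hδ : LipschitzWith L δ)
    {p q : ℝ} : eVariationOn δ (Icc p q) ≤ ENNReal.ofReal (∫ t in p..q, supAbsDerivDist δ t) := by
  set G : ℝ → ℝ := fun x => ∫ t in p..x, supAbsDerivDist δ t
  have hG (x y : ℝ) : G y - G x = ∫ t in x..y, supAbsDerivDist δ t :=
    intervalIntegral.integral_interval_sub_left (hδ.intervalIntegrable_supAbsDerivDist _ _)
      (hδ.intervalIntegrable_supAbsDerivDist _ _)
  have hGmono : Monotone G := fun x y hxy => sub_nonneg.1 <| (hG x y).symm ▸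
    intervalIntegral.integral_nonneg hxy fun t _ => supAbsDerivDist_nonneg δ t
  have hcomp (x y : ℝ) : edist (δ x) (δ y) ≤ edist (G x) (G y) := by
    wlog hxy : x ≤ y generalizing x y
    · rw [edist_comm, edist_comm (G x)]; exact this y x (le_of_not_ge hxy)
    rw [edist_dist, edist_dist, Real.dist_eq, abs_sub_comm,
      abs_of_nonneg (sub_nonneg.2 (hGmono hxy)), hG]
    exact ENNReal.ofReal_le_ofReal (hδ.dist_le_integral_supAbsDerivDist hxy)
  calc eVariationOn δ (Icc p q) ≤ eVariationOn G (Icc p q) :=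
        eVariationOn_le_of_edist_le fun x _ y _ => hcomp x y
    _ = ENNReal.ofReal (G q - G p) := by
        simpa using (hGmono.monotoneOn univ).eVariationOn_eq (mem_univ p) (mem_univ q)
    _ = _ := by rw [hG]

theorem LipschitzWith.tendsto_dist_div_of_hasDerivAt (hδ : LipschitzWith L δ) {t w : ℝ}
    (hF : HasDerivAt (variationOnFromTo δ univ 0) w t)
    (hG : HasDerivAt (fun x => ∫ s in (0 : ℝ)..x, supAbsDerivDist δ s) (supAbsDerivDist δ t) t)
    (hφ : ∀ r : ℚ, DifferentiableAt ℝ (fun s => dist (δ s) (δ r)) t) :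
    Tendsto (fun h => dist (δ (t + h)) (δ t) / h) (𝓝[>] 0) (𝓝 w) := by
  have hbv := hδ.locallyBoundedVariationOn univ
  have hvar := hbv.tendsto_eVariationOn_Icc_div hF
  have hw : w ≤ supAbsDerivDist δ t := by
    refine le_of_tendsto_of_tendsto hvar hG.tendsto_slope_zero_right ?_
    filter_upwards [self_mem_nhdsWithin] with h (hh : 0 < h)
    rw [smul_eq_mul, inv_mul_eq_div, intervalIntegral.integral_interval_sub_left
      (hδ.intervalIntegrable_supAbsDerivDist _ _) (hδ.intervalIntegrable_supAbsDerivDist _ _)]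
    gcongr
    exact ENNReal.toReal_le_of_le_ofReal (intervalIntegral.integral_nonneg (by linarith)
      fun s _ => supAbsDerivDist_nonneg δ s) hδ.eVariationOn_Icc_le_integral_supAbsDerivDist
  refine tendsto_order.2 ⟨fun c hc => ?_, fun c hc => ?_⟩
  · obtain ⟨r, hr⟩ := exists_lt_of_lt_ciSup (hc.trans_le hw)
    filter_upwards [(tendsto_order.1 (hφ r).hasDerivAt.tendsto_slope_zero_right.abs).1 c hr,
      self_mem_nhdsWithin] with h hlt (hh : 0 < h)
    refine hlt.trans_le ?_
    rw [smul_eq_mul, abs_mul, abs_inv, abs_of_pos hh, inv_mul_eq_div]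
    gcongr
    exact abs_dist_sub_le _ _ _
  · filter_upwards [(tendsto_order.1 hvar).2 c hc, self_mem_nhdsWithin] with h hlt (hh : 0 < h)
    refine lt_of_le_of_lt ?_ hlt
    have hbvI : BoundedVariationOn δ (Icc t (t + h)) := by
      simpa using hbv t (t + h) (mem_univ _) (mem_univ _)
    gcongr
    exact hbvI.dist_le ⟨by linarith, le_rfl⟩ ⟨le_rfl, by linarith⟩

theorem LipschitzWith.ae_tendsto_dist_div_and_eVariationOn_div (hδ : LipschitzWith L δ) :
    ∀ᵐ t, ∃ v, Tendsto (fun h => dist (δ (t + h)) (δ t) / h) (𝓝[>] 0) (𝓝 v) ∧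
      Tendsto (fun h => (eVariationOn δ (Icc t (t + h))).toReal / h) (𝓝[>] 0) (𝓝 v) := by
  have hbv := hδ.locallyBoundedVariationOn univ
  have hFmono : Monotone (variationOnFromTo δ univ 0) :=
    monotoneOn_univ.1 (variationOnFromTo.monotoneOn hbv (mem_univ 0))
  filter_upwards [hFmono.ae_differentiableAt,
    LocallyIntegrable.ae_hasDerivAt_integral hδ.locallyIntegrable_supAbsDerivDist,
    ae_all_iff.2 fun r : ℚ => (hδ.dist_comp_left (δ r)).ae_differentiableAt_real] with t hF hG hφ
  exact ⟨_, hδ.tendsto_dist_div_of_hasDerivAt hF.hasDerivAt (hG 0) hφ,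
    hbv.tendsto_eVariationOn_Icc_div hF.hasDerivAt⟩

end SupAbsDerivDist

/-- For a Lipschitz curve `γ : [a,b] → X`, for almost every `t ∈ [a,b)` the metric
speed exists and equals the derivative of the arc-length function:
`lim_{h→0⁺} ℓ(γ|_[t,t+h])/h = lim_{h→0⁺} d(γ(t+h),γ(t))/h`. -/
theorem stmt_4 {X : Type*} [MetricSpace X] (a b : ℝ) (L : NNReal) (γ : ℝ → X)
    (hγ : LipschitzOnWith L γ (Icc a b)) :
    ∀ᵐ t ∂(volume.restrict (Ico a b)),
      ∃ v : ℝ,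
        Tendsto (fun h : ℝ => dist (γ (t + h)) (γ t) / h) (nhdsWithin 0 (Ioi 0)) (nhds v) ∧
        Tendsto (fun h : ℝ => (eVariationOn γ (Icc t (t + h))).toReal / h)
          (nhdsWithin 0 (Ioi 0)) (nhds v) := by
  obtain ⟨δ, hδ, hγδ⟩ := hγ.exists_lipschitzWith_eqOn_Icc
  filter_upwards [ae_restrict_of_ae hδ.ae_tendsto_dist_div_and_eVariationOn_div,
    ae_restrict_mem measurableSet_Ico] with t ⟨v, hdist, hvar⟩ ⟨hat, htb⟩
  have hsub : ∀ᶠ h in 𝓝[>] (0 : ℝ), Icc t (t + h) ⊆ Icc a b := by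
    filter_upwards [Ioo_mem_nhdsGT (sub_pos.2 htb)] with h hh
    exact Icc_subset_Icc hat (by linarith [hh.2])
  refine ⟨v, hdist.congr' ?_, hvar.congr' ?_⟩ <;>
    filter_upwards [hsub, self_mem_nhdsWithin] with h hh (hpos : 0 < h)
  · rw [hγδ (hh ⟨le_rfl, by linarith⟩), hγδ (hh ⟨by linarith, le_rfl⟩)]
  · rw [eVariationOn.eq_of_eqOn (hγδ.mono hh)]
end

section
/- Let g : ℝᵐ → ℝⁿ be any map and f : ℝⁿ → ℝᴺ be Lipschitz. If both g and f∘g are differentiable at x ∈ ℝᵐ, then rank D(f∘g)(x) ≤ rank Dg(x). -/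
/-! If `v ∈ ker Dg(x)`, then `t ↦ g (x + t • v)` has derivative `0` at `t = 0`; a Lipschitz map
preserves the estimate `o(t)` on increments, so `t ↦ f (g (x + t • v))` has derivative `0` too,
i.e. `v ∈ ker D(f∘g)(x)`. Hence `ker Dg(x) ⊆ ker D(f∘g)(x)`, and rank–nullity turns this inclusion
into the inequality of ranks. -/

open Asymptotics Topology

theorem LinearMap.finrank_range_le_of_ker_le {K V V₁ V₂ : Type*} [DivisionRing K]
    [AddCommGroup V] [Module K V] [FiniteDimensional K V] [AddCommGroup V₁] [Module K V₁]
    [AddCommGroup V₂] [Module K V₂] {A : V →ₗ[K] V₁} {B : V →ₗ[K] V₂} (h : ker A ≤ ker B) :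
    Module.finrank K (range B) ≤ Module.finrank K (range A) := by
  have hA := finrank_range_add_finrank_ker A
  have hB := finrank_range_add_finrank_ker B
  have hker := Submodule.finrank_mono h
  omega

section

variable {𝕜 E F G : Type*} [NontriviallyNormedField 𝕜]
  [NormedAddCommGroup E] [NormedSpace 𝕜 E] [NormedAddCommGroup F] [NormedSpace 𝕜 F]
  [NormedAddCommGroup G] [NormedSpace 𝕜 G]

theorem LipschitzWith.hasFDerivAt_comp_of_hasFDerivAt_zero {K : NNReal} {f : F → G}
    (hf : LipschitzWith K f) {φ : E → F} {x : E} (hφ : HasFDerivAt φ (0 : E →L[𝕜] F) x) :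
    HasFDerivAt (f ∘ φ) (0 : E →L[𝕜] G) x := by
  have hφo : (fun y ↦ φ y - φ x) =o[𝓝 x] (fun y ↦ y - x) := by
    simpa using hφ.isLittleO
  refine .of_isLittleO ?_
  simpa using (isBigO_of_le' (c := (K : ℝ)) _ fun y ↦ by
    simpa only [dist_eq_norm] using hf.dist_le_mul (φ y) (φ x)).trans_isLittleO hφo

theorem LipschitzWith.hasDerivAt_comp_of_hasDerivAt_zero {K : NNReal} {f : F → G}
    (hf : LipschitzWith K f) {φ : 𝕜 → F} {t : 𝕜} (hφ : HasDerivAt φ 0 t) :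
    HasDerivAt (f ∘ φ) 0 t := by
  rw [hasDerivAt_iff_hasFDerivAt, ContinuousLinearMap.toSpanSingleton_zero] at hφ ⊢
  exact hf.hasFDerivAt_comp_of_hasFDerivAt_zero hφ

theorem LipschitzWith.ker_fderiv_le_ker_fderiv_comp {K : NNReal} {f : F → G}
    (hf : LipschitzWith K f) {g : E → F} {x : E} {g' : E →L[𝕜] F} {D : E →L[𝕜] G}
    (hg : HasFDerivAt g g' x) (hfg : HasFDerivAt (f ∘ g) D x) :
    LinearMap.ker g'.toLinearMap ≤ LinearMap.ker D.toLinearMap := by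
  intro v hv
  rw [LinearMap.mem_ker, ContinuousLinearMap.coe_coe] at hv ⊢
  have hline : HasDerivAt (fun t : 𝕜 ↦ x + t • v) v 0 := by
    simpa using ((hasDerivAt_id (0 : 𝕜)).smul_const v).const_add x
  have hg_line : HasDerivAt (g ∘ fun t : 𝕜 ↦ x + t • v) 0 0 :=
    hv ▸ hg.comp_hasDerivAt_of_eq 0 hline (by simp)
  have hfg_line : HasDerivAt ((f ∘ g) ∘ fun t : 𝕜 ↦ x + t • v) (D v) 0 :=
    hfg.comp_hasDerivAt_of_eq 0 hline (by simp)
  exact hfg_line.unique (hf.hasDerivAt_comp_of_hasDerivAt_zero hg_line)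

end

/-- If `g : ℝᵐ → ℝⁿ` is any map, `f : ℝⁿ → ℝᴺ` is Lipschitz, and both `g` and `f ∘ g`
are differentiable at `x`, then `rank D(f∘g)(x) ≤ rank Dg(x)`. -/
theorem stmt_5 {m n N : ℕ} (g : EuclideanSpace ℝ (Fin m) → EuclideanSpace ℝ (Fin n))
    (f : EuclideanSpace ℝ (Fin n) → EuclideanSpace ℝ (Fin N))
    (K : NNReal) (hf : LipschitzWith K f)
    (x : EuclideanSpace ℝ (Fin m))
    (g' : EuclideanSpace ℝ (Fin m) →L[ℝ] EuclideanSpace ℝ (Fin n))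
    (D : EuclideanSpace ℝ (Fin m) →L[ℝ] EuclideanSpace ℝ (Fin N))
    (hg : HasFDerivAt g g' x) (hfg : HasFDerivAt (f ∘ g) D x) :
    Module.finrank ℝ (LinearMap.range D.toLinearMap) ≤
      Module.finrank ℝ (LinearMap.range g'.toLinearMap) :=
  LinearMap.finrank_range_le_of_ker_le (hf.ker_fderiv_le_ker_fderiv_comp hg hfg)
end

section
/- Let γₙ : [0,1] → ℝ² be Lipschitz curves with γₙ(0)=γₙ(1), converging uniformly to a Lipschitz curve γ : [0,1] → ℝ² with γ(0)=γ(1), and suppose the lengths ℓ(γₙ) are uniformly bounded by M. Then the oriented enclosed areas converge: ∫₀¹ γₙ,₁(t) γₙ,₂′(t) dt → ∫₀¹ γ₁(t) γ₂′(t) dt as n → ∞. -/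
/-! Write `A(x, y) = ∫₀¹ x y'` and split
`A(xₙ, yₙ) - A(x, y) = (A(xₙ, yₙ) - A(x, yₙ)) + (A(x, yₙ) - A(x, y))`.
The first difference is at most `‖xₙ - x‖∞ ∫₀¹ |yₙ'| ≤ ‖xₙ - x‖∞ M`, because the integral of `|g'|`
never exceeds the variation of `g` (a.e. `|g'|` is dominated by the derivative of the variation
function). Integrating by parts, the second difference is `[x (yₙ - y)]₀¹ - ∫₀¹ x' (yₙ - y)`, which
is at most `‖yₙ - y‖∞ (|x 0| + |x 1| + ℓ(x))`. Both bounds tend to `0` by uniform convergence. -/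

open Set Filter intervalIntegral MeasureTheory Topology

theorem abs_deriv_le_deriv_variationOnFromTo {g : ℝ → ℝ} {s : Set ℝ} {a x : ℝ}
    (hg : LocallyBoundedVariationOn g s) (ha : a ∈ s) (hs : s ∈ 𝓝 x)
    (hgx : DifferentiableAt ℝ g x) (hVx : DifferentiableAt ℝ (variationOnFromTo g s a) x) :
    |deriv g x| ≤ deriv (variationOnFromTo g s a) x := by
  have hadd : 0 ≤ deriv (variationOnFromTo g s a + g) x := by
    rw [← derivWithin_of_mem_nhds hs]
    exact (variationOnFromTo.add_self_monotoneOn hg ha).derivWithin_nonneg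
  have hsub : 0 ≤ deriv (variationOnFromTo g s a - g) x := by
    rw [← derivWithin_of_mem_nhds hs]
    exact (variationOnFromTo.sub_self_monotoneOn hg ha).derivWithin_nonneg
  rw [deriv_add hVx hgx] at hadd
  rw [deriv_sub hVx hgx] at hsub
  exact abs_le.2 ⟨by linarith, by linarith⟩

theorem BoundedVariationOn.integral_abs_deriv_le {g : ℝ → ℝ} {a b : ℝ} (hab : a ≤ b)
    (hg : BoundedVariationOn g (Icc a b)) :
    ∫ x in a..b, |deriv g x| ≤ (eVariationOn g (Icc a b)).toReal := by
  set V := variationOnFromTo g (Icc a b) a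
  have ha : a ∈ Icc a b := left_mem_Icc.2 hab
  have hV : MonotoneOn V (Icc a b) := variationOnFromTo.monotoneOn hg.locallyBoundedVariationOn ha
  have hV' : MonotoneOn V (uIcc a b) := by rwa [uIcc_of_le hab]
  have hg' : BoundedVariationOn g (uIcc a b) := by rwa [uIcc_of_le hab]
  have hae : ∀ᵐ x ∂volume.restrict (Icc a b), |deriv g x| ≤ deriv V x := by
    rw [← restrict_Ioo_eq_restrict_Icc, ae_restrict_iff' measurableSet_Ioo]
    filter_upwards [hg.locallyBoundedVariationOn.ae_differentiableWithinAt_of_mem,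
      hV.ae_differentiableWithinAt_of_mem] with x hgx hVx hx
    have hnhds : Icc a b ∈ 𝓝 x := Icc_mem_nhds hx.1 hx.2
    exact abs_deriv_le_deriv_variationOnFromTo hg.locallyBoundedVariationOn ha hnhds
      ((hgx (Ioo_subset_Icc_self hx)).differentiableAt hnhds)
      ((hVx (Ioo_subset_Icc_self hx)).differentiableAt hnhds)
  have hVb : V b = (eVariationOn g (Icc a b)).toReal := by
    simp [V, variationOnFromTo.eq_of_le _ _ hab]
  calc ∫ x in a..b, |deriv g x| ≤ ∫ x in a..b, deriv V x :=
        integral_mono_ae_restrict hab hg'.intervalIntegrable_deriv.abs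
          hV'.intervalIntegrable_deriv hae
    _ ≤ V b - V a := by
        have hVab : V a ≤ V b := hV ha (right_mem_Icc.2 hab) hab
        exact (uIcc_of_le (sub_nonneg.2 hVab) ▸ hV'.intervalIntegral_deriv_mem_uIcc).2
    _ = (eVariationOn g (Icc a b)).toReal := by
        rw [hVb, show V a = 0 from variationOnFromTo.self g _ a, sub_zero]

theorem abs_integral_mul_deriv_le {f g : ℝ → ℝ} {a b ε : ℝ} (hab : a ≤ b)
    (hf : ∀ t ∈ Icc a b, |f t| ≤ ε) (hg : BoundedVariationOn g (Icc a b)) :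
    |∫ t in a..b, f t * deriv g t| ≤ ε * (eVariationOn g (Icc a b)).toReal := by
  have hε : 0 ≤ ε := (abs_nonneg _).trans (hf a (left_mem_Icc.2 hab))
  have hg' : IntervalIntegrable (deriv g) volume a b := by
    rw [← uIcc_of_le hab] at hg
    exact hg.intervalIntegrable_deriv
  calc |∫ t in a..b, f t * deriv g t| ≤ ∫ t in a..b, ε * |deriv g t| :=
        norm_integral_le_of_norm_le hab (ae_of_all _ fun t ht => by
          rw [Real.norm_eq_abs, abs_mul]
          exact mul_le_mul_of_nonneg_right (hf t (Ioc_subset_Icc_self ht)) (abs_nonneg _))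
          (hg'.abs.const_mul ε)
    _ = ε * ∫ t in a..b, |deriv g t| := integral_const_mul ε _
    _ ≤ ε * (eVariationOn g (Icc a b)).toReal :=
        mul_le_mul_of_nonneg_left (hg.integral_abs_deriv_le hab) hε

theorem abs_integral_sub_mul_deriv_le {f₁ f₂ g : ℝ → ℝ} {a b ε : ℝ} (hab : a ≤ b)
    (hf₁ : ContinuousOn f₁ (Icc a b)) (hf₂ : ContinuousOn f₂ (Icc a b))
    (hg : BoundedVariationOn g (Icc a b)) (hε : ∀ t ∈ Icc a b, |f₁ t - f₂ t| ≤ ε) :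
    |(∫ t in a..b, f₁ t * deriv g t) - ∫ t in a..b, f₂ t * deriv g t|
      ≤ ε * (eVariationOn g (Icc a b)).toReal := by
  rw [← uIcc_of_le hab] at hf₁ hf₂
  have hg' : IntervalIntegrable (deriv g) volume a b := by
    rw [← uIcc_of_le hab] at hg
    exact hg.intervalIntegrable_deriv
  rw [← integral_sub (hg'.continuousOn_mul hf₁) (hg'.continuousOn_mul hf₂)]
  simp_rw [← sub_mul]
  exact abs_integral_mul_deriv_le hab hε hg

theorem abs_integral_mul_deriv_sub_le {u v w : ℝ → ℝ} {a b ε : ℝ} (hab : a ≤ b)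
    (hu : AbsolutelyContinuousOnInterval u a b) (hv : AbsolutelyContinuousOnInterval v a b)
    (hw : AbsolutelyContinuousOnInterval w a b) (hε : ∀ t ∈ Icc a b, |v t - w t| ≤ ε) :
    |(∫ t in a..b, u t * deriv v t) - ∫ t in a..b, u t * deriv w t|
      ≤ ε * (|u a| + |u b| + (eVariationOn u (Icc a b)).toReal) := by
  have hu' := hu.intervalIntegrable_deriv
  have hbv : BoundedVariationOn u (Icc a b) := uIcc_of_le hab ▸ hu.boundedVariationOn
  have hparts : (∫ t in a..b, deriv u t * v t) - ∫ t in a..b, deriv u t * w t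
      = ∫ t in a..b, (v t - w t) * deriv u t := by
    rw [← integral_sub (hu'.mul_continuousOn hv.continuousOn)
      (hu'.mul_continuousOn hw.continuousOn)]
    congr 1 with t
    ring
  rw [hu.integral_mul_deriv_eq_deriv_mul hv, hu.integral_mul_deriv_eq_deriv_mul hw]
  calc |u b * v b - u a * v a - (∫ t in a..b, deriv u t * v t)
        - (u b * w b - u a * w a - ∫ t in a..b, deriv u t * w t)|
      = |u b * (v b - w b) - u a * (v a - w a) - ∫ t in a..b, (v t - w t) * deriv u t| := by
        rw [← hparts]; ring_nf
    _ ≤ |u b| * |v b - w b| + |u a| * |v a - w a|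
        + |∫ t in a..b, (v t - w t) * deriv u t| := by
        rw [← abs_mul, ← abs_mul]
        exact (abs_sub _ _).trans (add_le_add_left (abs_sub _ _) _)
    _ ≤ |u b| * ε + |u a| * ε + ε * (eVariationOn u (Icc a b)).toReal := by
        gcongr
        exacts [hε b (right_mem_Icc.2 hab), hε a (left_mem_Icc.2 hab),
          abs_integral_mul_deriv_le hab hε hbv]
    _ = ε * (|u a| + |u b| + (eVariationOn u (Icc a b)).toReal) := by ring

theorem abs_integral_mul_deriv_sub_integral_mul_deriv_le {x₁ y₁ x₂ y₂ : ℝ → ℝ} {a b ε : ℝ}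
    (hab : a ≤ b) (hx₁ : AbsolutelyContinuousOnInterval x₁ a b)
    (hy₁ : AbsolutelyContinuousOnInterval y₁ a b) (hx₂ : AbsolutelyContinuousOnInterval x₂ a b)
    (hy₂ : AbsolutelyContinuousOnInterval y₂ a b)
    (hx : ∀ t ∈ Icc a b, |x₁ t - x₂ t| ≤ ε) (hy : ∀ t ∈ Icc a b, |y₁ t - y₂ t| ≤ ε) :
    |(∫ t in a..b, x₁ t * deriv y₁ t) - ∫ t in a..b, x₂ t * deriv y₂ t|
      ≤ ε * ((eVariationOn y₁ (Icc a b)).toReal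
        + (|x₂ a| + |x₂ b| + (eVariationOn x₂ (Icc a b)).toReal)) := by
  rw [mul_add]
  calc _ ≤ |(∫ t in a..b, x₁ t * deriv y₁ t) - ∫ t in a..b, x₂ t * deriv y₁ t|
        + |(∫ t in a..b, x₂ t * deriv y₁ t) - ∫ t in a..b, x₂ t * deriv y₂ t| := abs_sub_le _ _ _
    _ ≤ _ := by
      have hI : uIcc a b = Icc a b := uIcc_of_le hab
      exact add_le_add
        (abs_integral_sub_mul_deriv_le hab (hI ▸ hx₁.continuousOn) (hI ▸ hx₂.continuousOn)
          (hI ▸ hy₁.boundedVariationOn) hx)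
        (abs_integral_mul_deriv_sub_le hab hx₂ hy₁ hy₂ hy)

theorem tendsto_of_forall_eventually_dist_le_mul {ι α : Type*} [PseudoMetricSpace α]
    {l : Filter ι} {f : ι → α} {y : α} (C : ℝ)
    (h : ∀ ε > 0, ∀ᶠ n in l, dist (f n) y ≤ C * ε) : Tendsto f l (𝓝 y) := by
  refine Metric.tendsto_nhds.2 fun ε hε => ?_
  have hC : 0 < |C| + 1 := by positivity
  filter_upwards [h (ε / (|C| + 1)) (div_pos hε hC)] with n hn
  calc dist (f n) y ≤ C * (ε / (|C| + 1)) := hn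
    _ ≤ |C| * (ε / (|C| + 1)) := by gcongr; exact le_abs_self C
    _ < ε := by rw [mul_div_assoc', div_lt_iff₀ hC]; nlinarith [abs_nonneg C]

theorem stmt_7_general (γ : ℕ → ℝ → ℝ × ℝ) (γ₀ : ℝ → ℝ × ℝ) (K : ℕ → NNReal) (K₀ : NNReal) (M : ℝ)
    (hγ : ∀ n, LipschitzOnWith (K n) (γ n) (Icc 0 1))
    (hγ₀ : LipschitzOnWith K₀ γ₀ (Icc 0 1))
    (hunif : TendstoUniformlyOn γ γ₀ atTop (Icc 0 1))
    (hlen : ∀ n, eVariationOn (γ n) (Icc 0 1) ≤ ENNReal.ofReal M) :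
    Tendsto (fun n => ∫ t in (0:ℝ)..1, (γ n t).1 * deriv (fun s => (γ n s).2) t)
      atTop (nhds (∫ t in (0:ℝ)..1, (γ₀ t).1 * deriv (fun s => (γ₀ s).2) t)) := by
  have hAC : ∀ {f : ℝ → ℝ} {L}, LipschitzOnWith L f (Icc 0 1) →
      AbsolutelyContinuousOnInterval f 0 1 := fun hf =>
    LipschitzOnWith.absolutelyContinuousOnInterval (by rwa [uIcc_of_le zero_le_one])
  have hvar : ∀ n, (eVariationOn (fun t => (γ n t).2) (Icc 0 1)).toReal
      ≤ (ENNReal.ofReal M).toReal := fun n =>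
    ENNReal.toReal_mono ENNReal.ofReal_ne_top <|
      (LipschitzWith.prod_snd.lipschitzOnWith.comp_eVariationOn_le (mapsTo_univ _ _)).trans
        (by simpa using hlen n)
  refine tendsto_of_forall_eventually_dist_le_mul ((ENNReal.ofReal M).toReal + (|(γ₀ 0).1|
    + |(γ₀ 1).1| + (eVariationOn (fun t => (γ₀ t).1) (Icc 0 1)).toReal)) fun ε hε => ?_
  filter_upwards [Metric.tendstoUniformlyOn_iff.1 hunif ε hε] with n hn
  have hclose : ∀ t ∈ Icc (0:ℝ) 1,
      |(γ n t).1 - (γ₀ t).1| ≤ ε ∧ |(γ n t).2 - (γ₀ t).2| ≤ ε := fun t ht => by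
    have := (hn t ht).le
    rw [dist_comm, Prod.dist_eq, Real.dist_eq, Real.dist_eq] at this
    exact ⟨(le_max_left _ _).trans this, (le_max_right _ _).trans this⟩
  rw [Real.dist_eq]
  refine (abs_integral_mul_deriv_sub_integral_mul_deriv_le zero_le_one
    (hAC (LipschitzWith.prod_fst.comp_lipschitzOnWith (hγ n)))
    (hAC (LipschitzWith.prod_snd.comp_lipschitzOnWith (hγ n)))
    (hAC (LipschitzWith.prod_fst.comp_lipschitzOnWith hγ₀))
    (hAC (LipschitzWith.prod_snd.comp_lipschitzOnWith hγ₀))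
    (fun t ht => (hclose t ht).1) fun t ht => (hclose t ht).2).trans ?_
  simp only [Function.comp_def]
  nlinarith [hvar n]

/-- If closed Lipschitz curves `γₙ : [0,1] → ℝ²` converge uniformly to a closed Lipschitz
curve `γ₀` and their lengths are uniformly bounded by `M`, then the oriented enclosed
areas `∫₀¹ γₙ,₁ γₙ,₂′` converge to `∫₀¹ γ₀,₁ γ₀,₂′`. -/
theorem stmt_7 (γ : ℕ → ℝ → ℝ × ℝ) (γ₀ : ℝ → ℝ × ℝ) (K : ℕ → NNReal) (K₀ : NNReal) (M : ℝ)
    (hγ : ∀ n, LipschitzOnWith (K n) (γ n) (Icc 0 1))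
    (hγ₀ : LipschitzOnWith K₀ γ₀ (Icc 0 1))
    (hclosed : ∀ n, γ n 0 = γ n 1) (hclosed₀ : γ₀ 0 = γ₀ 1)
    (hunif : TendstoUniformlyOn γ γ₀ atTop (Icc 0 1))
    (hlen : ∀ n, eVariationOn (γ n) (Icc 0 1) ≤ ENNReal.ofReal M) :
    Tendsto (fun n => ∫ t in (0:ℝ)..1, (γ n t).1 * deriv (fun s => (γ n s).2) t)
      atTop (nhds (∫ t in (0:ℝ)..1, (γ₀ t).1 * deriv (fun s => (γ₀ s).2) t)) :=
  stmt_7_general γ γ₀ K K₀ M hγ hγ₀ hunif hlen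
end

section
/- If X is a compact quasiconvex metric space and Φ : X → Y is Lipschitz, then the quotient space Z_Φ (with metric d_Φ) is a geodesic metric space. -/
/-!
Quasiconvexity of `X` and the Lipschitz bound on `Φ` give `d_Φ ≤ L C d`, so the quotient map
`ψ` is Lipschitz and `Z` is compact. If `γ` almost realises `d_Φ(x, y)`, then every `ψ (γ t)` is
almost between `ψ x` and `ψ y`, and by the intermediate value theorem some `ψ (γ t)` is
equidistant from them: an approximate midpoint. A point minimising
`max (dist (ψ x) m) (dist m (ψ y))` over the compact space `Z` is then an exact midpoint.
Finally, in a complete space with midpoints, iterated midpoints placed at the dyadic parameters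
extend to a `d(a, b)`-Lipschitz curve on `[0, 1]` from `a` to `b`, which is a geodesic.
-/

open Set

/-- `dPhi Φ x y` is the infimum of the lengths `ℓ(Φ∘γ)` over all rectifiable curves
`γ : [0,1] → X` joining `x` to `y`. -/
noncomputable def dPhi {X Y : Type*} [MetricSpace X] [MetricSpace Y] (Φ : X → Y)
    (x y : X) : ENNReal :=
  ⨅ (γ : ℝ → X) (_ : ContinuousOn γ (Icc 0 1)) (_ : eVariationOn γ (Icc 0 1) ≠ ⊤)
    (_ : γ 0 = x) (_ : γ 1 = y), eVariationOn (Φ ∘ γ) (Icc 0 1)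

/-- `X` is `C`-quasiconvex. -/
def IsQuasiconvexSpace (X : Type*) [MetricSpace X] (C : NNReal) : Prop :=
  ∀ x y : X, ∃ γ : ℝ → X, ContinuousOn γ (Icc 0 1) ∧ γ 0 = x ∧ γ 1 = y ∧
    eVariationOn γ (Icc 0 1) ≤ (C : ENNReal) * edist x y

open Filter Topology ENNReal NNReal

def IsMidpointMap {Z : Type*} [PseudoMetricSpace Z] (mid : Z → Z → Z) : Prop :=
  ∀ x y, dist x (mid x y) ≤ dist x y / 2 ∧ dist (mid x y) y ≤ dist x y / 2

section Dyadic

variable {Z : Type*} (mid : Z → Z → Z) (a b : Z)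

/-- `dyadicPt mid a b n k` is the point at parameter `k / 2 ^ n`. -/
noncomputable def dyadicPt : ℕ → ℕ → Z
  | 0, k => if k = 0 then a else b
  | n + 1, k =>
    if k % 2 = 0 then dyadicPt n (k / 2) else mid (dyadicPt n (k / 2)) (dyadicPt n (k / 2 + 1))

@[simp]
lemma dyadicPt_zero_right (n : ℕ) : dyadicPt mid a b n 0 = a := by
  induction n with
  | zero => simp [dyadicPt]
  | succ n ih => simp [dyadicPt, ih]

lemma dyadicPt_two_mul (n k : ℕ) :
    dyadicPt mid a b (n + 1) (2 * k) = dyadicPt mid a b n k := by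
  simp [dyadicPt]

lemma dyadicPt_two_mul_add_one (n k : ℕ) :
    dyadicPt mid a b (n + 1) (2 * k + 1) =
      mid (dyadicPt mid a b n k) (dyadicPt mid a b n (k + 1)) := by
  simp [dyadicPt, Nat.add_mod, Nat.add_div]

lemma dyadicPt_two_pow (n : ℕ) : dyadicPt mid a b n (2 ^ n) = b := by
  induction n with
  | zero => simp [dyadicPt]
  | succ n ih => rw [pow_succ', dyadicPt_two_mul, ih]

variable [MetricSpace Z] {mid}

lemma dist_dyadicPt_succ_le (hmid : IsMidpointMap mid) (n k : ℕ) :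
    dist (dyadicPt mid a b n k) (dyadicPt mid a b n (k + 1)) ≤ dist a b / 2 ^ n := by
  induction n generalizing k with
  | zero => cases k <;> simp [dyadicPt]
  | succ n ih =>
    have half : dist (dyadicPt mid a b n (k / 2)) (dyadicPt mid a b n (k / 2 + 1)) / 2 ≤
        dist a b / 2 ^ (n + 1) := by
      rw [pow_succ, ← div_div]
      gcongr
      exact ih _
    obtain ⟨j, rfl | rfl⟩ := Nat.even_or_odd' k
    · rw [dyadicPt_two_mul, dyadicPt_two_mul_add_one]
      simpa using (hmid _ _).1.trans half
    · rw [dyadicPt_two_mul_add_one, show 2 * j + 1 + 1 = 2 * (j + 1) by ring, dyadicPt_two_mul]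
      simpa [Nat.add_div] using (hmid _ _).2.trans half

lemma dist_dyadicPt_le (hmid : IsMidpointMap mid) (n : ℕ) {j k : ℕ} (hjk : j ≤ k) :
    dist (dyadicPt mid a b n j) (dyadicPt mid a b n k) ≤ ((k : ℝ) - j) * (dist a b / 2 ^ n) := by
  induction k, hjk using Nat.le_induction with
  | base => simp
  | succ k _ ih =>
    calc _ ≤ dist (dyadicPt mid a b n j) (dyadicPt mid a b n k) +
          dist (dyadicPt mid a b n k) (dyadicPt mid a b n (k + 1)) := dist_triangle _ _ _
      _ ≤ ((k : ℝ) - j) * (dist a b / 2 ^ n) + dist a b / 2 ^ n :=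
          add_le_add ih (dist_dyadicPt_succ_le a b hmid n k)
      _ = _ := by push_cast; ring

lemma dist_dyadicPt_div_two_le (hmid : IsMidpointMap mid) (n k : ℕ) :
    dist (dyadicPt mid a b n (k / 2)) (dyadicPt mid a b (n + 1) k) ≤ dist a b / 2 / 2 ^ n := by
  rw [← dyadicPt_two_mul, div_div, ← pow_succ']
  obtain ⟨j, rfl | rfl⟩ := Nat.even_or_odd' k
  · simp [div_nonneg dist_nonneg]
  · simpa [Nat.add_div] using dist_dyadicPt_succ_le a b hmid (n + 1) (2 * j)

variable (mid) in
noncomputable def dyadicPath (t : ℝ) : Z :=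
  haveI : Nonempty Z := ⟨a⟩
  limUnder atTop fun n ↦ dyadicPt mid a b n ⌊t * 2 ^ n⌋₊

variable [CompleteSpace Z]

lemma tendsto_dyadicPt_dyadicPath (hmid : IsMidpointMap mid) (t : ℝ) :
    Tendsto (fun n ↦ dyadicPt mid a b n ⌊t * 2 ^ n⌋₊) atTop (𝓝 (dyadicPath mid a b t)) := by
  refine (cauchySeq_of_le_geometric_two (C := dist a b) fun n ↦ ?_).tendsto_limUnder
  have hfloor : ⌊t * 2 ^ n⌋₊ = ⌊t * 2 ^ (n + 1)⌋₊ / 2 := by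
    rw [← Nat.floor_div_natCast]
    congr 1
    push_cast
    ring
  rw [hfloor]
  exact dist_dyadicPt_div_two_le a b hmid n _

lemma dyadicPath_zero (hmid : IsMidpointMap mid) : dyadicPath mid a b 0 = a :=
  tendsto_nhds_unique (tendsto_dyadicPt_dyadicPath a b hmid 0) (by simp)

lemma dyadicPath_one (hmid : IsMidpointMap mid) : dyadicPath mid a b 1 = b := by
  refine tendsto_nhds_unique (tendsto_dyadicPt_dyadicPath a b hmid 1) ?_
  have (n : ℕ) : ⌊(2 : ℝ) ^ n⌋₊ = 2 ^ n := by
    rw [← Nat.cast_ofNat, ← Nat.cast_pow, Nat.floor_natCast]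
  simp [this, dyadicPt_two_pow]

lemma dist_dyadicPath_le (hmid : IsMidpointMap mid) {s t : ℝ} (hs : 0 ≤ s) (hst : s ≤ t) :
    dist (dyadicPath mid a b s) (dyadicPath mid a b t) ≤ dist a b * (t - s) := by
  have hbound (n : ℕ) :
      dist (dyadicPt mid a b n ⌊s * 2 ^ n⌋₊) (dyadicPt mid a b n ⌊t * 2 ^ n⌋₊) ≤
        dist a b * (t - s) + dist a b / 2 ^ n := by
    have h2n : (0 : ℝ) < 2 ^ n := by positivity
    have hcount : (⌊t * 2 ^ n⌋₊ : ℝ) - ⌊s * 2 ^ n⌋₊ ≤ (t - s) * 2 ^ n + 1 := by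
      have := Nat.floor_le (mul_nonneg (hs.trans hst) h2n.le)
      have := Nat.lt_floor_add_one (s * 2 ^ n)
      linarith
    calc _ ≤ ((⌊t * 2 ^ n⌋₊ : ℝ) - ⌊s * 2 ^ n⌋₊) * (dist a b / 2 ^ n) :=
          dist_dyadicPt_le a b hmid n (Nat.floor_le_floor (by gcongr))
      _ ≤ ((t - s) * 2 ^ n + 1) * (dist a b / 2 ^ n) := by gcongr
      _ = _ := by field_simp
  have hlim : Tendsto (fun n : ℕ ↦ dist a b * (t - s) + dist a b / 2 ^ n) atTop
      (𝓝 (dist a b * (t - s))) := by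
    simpa using (tendsto_const_nhds (x := dist a b * (t - s))).add
      ((tendsto_const_nhds (x := dist a b)).div_atTop
        (tendsto_pow_atTop_atTop_of_one_lt one_lt_two))
  exact le_of_tendsto_of_tendsto' ((tendsto_dyadicPt_dyadicPath a b hmid s).dist
    (tendsto_dyadicPt_dyadicPath a b hmid t)) hlim hbound

lemma lipschitzOnWith_dyadicPath (hmid : IsMidpointMap mid) :
    LipschitzOnWith (nndist a b) (dyadicPath mid a b) (Icc 0 1) := by
  refine LipschitzOnWith.of_dist_le_mul fun s hs t ht ↦ ?_
  rw [coe_nndist, Real.dist_eq]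
  rcases le_total s t with hst | hts
  · rw [abs_of_nonpos (by linarith), neg_sub]
    exact dist_dyadicPath_le a b hmid hs.1 hst
  · rw [abs_of_nonneg (by linarith), dist_comm]
    exact dist_dyadicPath_le a b hmid ht.1 hts

end Dyadic

lemma LipschitzOnWith.eVariationOn_Icc_zero_one_eq_edist {Z : Type*} [PseudoMetricSpace Z]
    {α : ℝ → Z} {a b : Z} (hα : LipschitzOnWith (nndist a b) α (Icc 0 1)) (h0 : α 0 = a)
    (h1 : α 1 = b) : eVariationOn α (Icc 0 1) = edist a b := by
  refine le_antisymm ?_ (h0 ▸ h1 ▸ eVariationOn.edist_le α (by simp) (by simp))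
  calc eVariationOn (α ∘ id) (Icc 0 1) ≤ nndist a b * eVariationOn id (Icc (0 : ℝ) 1) :=
        hα.comp_eVariationOn_le (mapsTo_id _)
    _ = edist a b := by simp

lemma exists_geodesic_of_forall_exists_midpoint {Z : Type*} [MetricSpace Z] [CompleteSpace Z]
    (hmid : ∀ x y : Z, ∃ m, dist x m ≤ dist x y / 2 ∧ dist m y ≤ dist x y / 2) (a b : Z) :
    ∃ α : ℝ → Z, ContinuousOn α (Icc 0 1) ∧ α 0 = a ∧ α 1 = b ∧
      eVariationOn α (Icc 0 1) = edist a b := by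
  choose mid hmid using hmid
  have hlip := lipschitzOnWith_dyadicPath a b hmid
  have h0 := dyadicPath_zero a b hmid
  have h1 := dyadicPath_one a b hmid
  exact ⟨dyadicPath mid a b, hlip.continuousOn, h0, h1,
    hlip.eVariationOn_Icc_zero_one_eq_edist h0 h1⟩

lemma exists_midpoint_of_forall_approx {Z : Type*} [MetricSpace Z] [CompactSpace Z] {a b : Z}
    (h : ∀ ε > 0, ∃ m, dist a m ≤ dist a b / 2 + ε ∧ dist m b ≤ dist a b / 2 + ε) :
    ∃ m, dist a m ≤ dist a b / 2 ∧ dist m b ≤ dist a b / 2 := by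
  obtain ⟨m₀, -, hm₀⟩ := isCompact_univ.exists_isMinOn ⟨a, mem_univ a⟩
    (f := fun m ↦ max (dist a m) (dist m b)) (by fun_prop)
  refine ⟨m₀, max_le_iff.1 (le_of_forall_pos_le_add fun ε hε ↦ ?_)⟩
  obtain ⟨m, ham, hmb⟩ := h ε hε
  exact (hm₀ (mem_univ m)).trans (max_le ham hmb)

lemma exists_midpoint_of_path {Z : Type*} [MetricSpace Z] {c : ℝ → Z}
    (hc : ContinuousOn c (Icc 0 1)) {r : ℝ}
    (hr : ∀ t ∈ Icc (0 : ℝ) 1, dist (c 0) (c t) + dist (c t) (c 1) ≤ r) :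
    ∃ m, dist (c 0) m ≤ r / 2 ∧ dist m (c 1) ≤ r / 2 := by
  have hg : ContinuousOn (fun t ↦ dist (c 0) (c t) - dist (c t) (c 1)) (Icc 0 1) := by
    fun_prop
  obtain ⟨t, ht, hbalanced⟩ := intermediate_value_Icc zero_le_one hg
    (show (0 : ℝ) ∈ Icc _ _ by simp [dist_comm (c 0)])
  have := hr t ht
  exact ⟨c t, by linarith, by linarith⟩

section dPhi

variable {X Y : Type*} [MetricSpace X] [MetricSpace Y] (Φ : X → Y)

lemma dPhi_le_eVariationOn {γ : ℝ → X} (hγ : ContinuousOn γ (Icc 0 1))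
    (hγv : eVariationOn γ (Icc 0 1) ≠ ⊤) :
    dPhi Φ (γ 0) (γ 1) ≤ eVariationOn (Φ ∘ γ) (Icc 0 1) :=
  iInf₂_le_of_le γ hγ <| iInf₂_le_of_le hγv rfl <| iInf_le_of_le rfl le_rfl

lemma dPhi_le_eVariationOn_Icc {γ : ℝ → X} (hγ : ContinuousOn γ (Icc 0 1))
    (hγv : eVariationOn γ (Icc 0 1) ≠ ⊤) {u v : ℝ} (hu : 0 ≤ u) (huv : u ≤ v) (hv : v ≤ 1) :
    dPhi Φ (γ u) (γ v) ≤ eVariationOn (Φ ∘ γ) (Icc u v) := by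
  set A : ℝ → ℝ := fun s ↦ u + s * (v - u)
  have hsub : Icc u v ⊆ Icc 0 1 := Icc_subset_Icc hu hv
  have hmaps : MapsTo A (Icc 0 1) (Icc u v) := fun s ⟨h0, h1⟩ ↦ by
    constructor <;> nlinarith
  have hmono : MonotoneOn A (Icc 0 1) := fun s _ s' _ h ↦ by
    simp only [A]
    nlinarith
  have hvar : eVariationOn (γ ∘ A) (Icc 0 1) ≠ ⊤ :=
    ne_top_of_le_ne_top hγv <| (eVariationOn.comp_le_of_monotoneOn γ A hmono hmaps).trans
      (eVariationOn.mono γ hsub)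
  simpa [A] using
    (dPhi_le_eVariationOn Φ (hγ.comp (by fun_prop) (hmaps.mono_right hsub)) hvar).trans
      (eVariationOn.comp_le_of_monotoneOn (Φ ∘ γ) A hmono hmaps)

lemma dPhi_le_mul_edist {C L : ℝ≥0} (hq : IsQuasiconvexSpace X C) (hΦ : LipschitzWith L Φ)
    (x y : X) : dPhi Φ x y ≤ L * (C * edist x y) := by
  obtain ⟨γ, hγ, rfl, rfl, hγv⟩ := hq x y
  calc dPhi Φ (γ 0) (γ 1) ≤ eVariationOn (Φ ∘ γ) (Icc 0 1) :=
        dPhi_le_eVariationOn Φ hγ (ne_top_of_le_ne_top (by finiteness) hγv)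
    _ ≤ L * eVariationOn γ (Icc 0 1) := hΦ.lipschitzOnWith.comp_eVariationOn_le (mapsTo_univ _ _)
    _ ≤ L * (C * edist (γ 0) (γ 1)) := by gcongr

lemma exists_path_dPhi_add_dPhi_lt {x y : X} {c : ℝ≥0∞} (h : dPhi Φ x y < c) :
    ∃ γ : ℝ → X, ContinuousOn γ (Icc 0 1) ∧ γ 0 = x ∧ γ 1 = y ∧
      ∀ t ∈ Icc (0 : ℝ) 1, dPhi Φ x (γ t) + dPhi Φ (γ t) y < c := by
  simp only [dPhi, iInf_lt_iff] at h
  obtain ⟨γ, hγ, hγv, rfl, rfl, hlt⟩ := h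
  refine ⟨γ, hγ, rfl, rfl, fun t ⟨ht0, ht1⟩ ↦ lt_of_le_of_lt ?_ hlt⟩
  calc dPhi Φ (γ 0) (γ t) + dPhi Φ (γ t) (γ 1)
      ≤ eVariationOn (Φ ∘ γ) (Icc 0 t) + eVariationOn (Φ ∘ γ) (Icc t 1) :=
        add_le_add (dPhi_le_eVariationOn_Icc Φ hγ hγv le_rfl ht0 ht1)
          (dPhi_le_eVariationOn_Icc Φ hγ hγv ht0 ht1 le_rfl)
    _ = eVariationOn (Φ ∘ γ) (Icc 0 1) := by
        simpa using eVariationOn.Icc_add_Icc (Φ ∘ γ) (s := univ) ht0 ht1 (mem_univ t)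

lemma exists_approx_midpoint_of_dPhi {Z : Type*} [MetricSpace Z] {ψ : X → Z}
    (hψ : Continuous ψ) (hquot : ∀ x y : X, edist (ψ x) (ψ y) = dPhi Φ x y) (x y : X)
    {ε : ℝ} (hε : 0 < ε) :
    ∃ m, dist (ψ x) m ≤ dist (ψ x) (ψ y) / 2 + ε ∧ dist m (ψ y) ≤ dist (ψ x) (ψ y) / 2 + ε := by
  set r := dist (ψ x) (ψ y) + 2 * ε
  have hlt : dPhi Φ x y < ENNReal.ofReal r := by
    rw [← hquot, edist_dist]
    exact (ENNReal.ofReal_lt_ofReal_iff (by positivity)).2 (by linarith)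
  obtain ⟨γ, hγ, rfl, rfl, hγt⟩ := exists_path_dPhi_add_dPhi_lt Φ hlt
  have hr : ∀ t ∈ Icc (0 : ℝ) 1, dist (ψ (γ 0)) (ψ (γ t)) + dist (ψ (γ t)) (ψ (γ 1)) ≤ r := by
    intro t ht
    have := hγt t ht
    rw [← hquot, ← hquot, edist_dist, edist_dist, ← ENNReal.ofReal_add dist_nonneg dist_nonneg,
      ENNReal.ofReal_lt_ofReal_iff (by positivity)] at this
    exact this.le
  obtain ⟨m, h0, h1⟩ := exists_midpoint_of_path (c := ψ ∘ γ) (hψ.comp_continuousOn hγ) hr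
  simp only [Function.comp_apply] at h0 h1
  exact ⟨m, by linarith, by linarith⟩

end dPhi

theorem stmt_11_general {X Y Z : Type*} [MetricSpace X] [MetricSpace Y] [MetricSpace Z]
    [CompactSpace X] (Cq L : NNReal) (hq : IsQuasiconvexSpace X Cq)
    (Φ : X → Y) (hΦ : LipschitzWith L Φ)
    (ψ : X → Z) (hsurj : Function.Surjective ψ)
    (hquot : ∀ x y : X, edist (ψ x) (ψ y) = dPhi Φ x y) :
    ∀ z₁ z₂ : Z, ∃ α : ℝ → Z, ContinuousOn α (Icc 0 1) ∧ α 0 = z₁ ∧ α 1 = z₂ ∧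
      eVariationOn α (Icc 0 1) = edist z₁ z₂ := by
  have hψ : LipschitzWith (L * Cq) ψ := fun x y ↦ by
    rw [hquot, ENNReal.coe_mul, mul_assoc]
    exact dPhi_le_mul_edist Φ hq hΦ x y
  have : CompactSpace Z := ⟨hsurj.range_eq ▸ isCompact_range hψ.continuous⟩
  have : CompleteSpace Z := complete_of_compact
  refine exists_geodesic_of_forall_exists_midpoint fun z₁ z₂ ↦
    exists_midpoint_of_forall_approx fun ε hε ↦ ?_
  obtain ⟨x, rfl⟩ := hsurj z₁
  obtain ⟨y, rfl⟩ := hsurj z₂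
  exact exists_approx_midpoint_of_dPhi Φ hψ.continuous hquot x y hε

/-- If `X` is a compact quasiconvex metric space, `Φ : X → Y` Lipschitz, and `Z` is the
metric quotient of `X` by `d_Φ`, then `Z` is a geodesic metric space. -/
theorem stmt_11 {X Y Z : Type*} [MetricSpace X] [MetricSpace Y] [MetricSpace Z]
    [CompactSpace X] (Cq L : NNReal) (hCq : 1 ≤ Cq) (hq : IsQuasiconvexSpace X Cq)
    (Φ : X → Y) (hΦ : LipschitzWith L Φ)
    (ψ : X → Z) (hsurj : Function.Surjective ψ)
    (hquot : ∀ x y : X, edist (ψ x) (ψ y) = dPhi Φ x y) :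
    ∀ z₁ z₂ : Z, ∃ α : ℝ → Z, ContinuousOn α (Icc 0 1) ∧ α 0 = z₁ ∧ α 1 = z₂ ∧
      eVariationOn α (Icc 0 1) = edist z₁ z₂ :=
  stmt_11_general Cq L hq Φ hΦ ψ hsurj hquot
end
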